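/- arXiv:2203.01906 — 2 statements merged into one kernel-verified Lean document; each statement's English description precedes it below -/
import Mathlib

section
/- Let f₊ and f₋ be smooth periodic solutions of −c f + (1/2) f² + α f'' + f⁽⁴⁾ = A with the same constants c, A, and with the same value H of the Hamiltonian. Then: (i) −c(avg(f₊) − avg(f₋)) + (1/2)(avg(f₊²) − avg(f₋²)) = 0; and (ii) (c/2)(avg(f₊²) − avg(f₋²)) − (1/3)(avg(f₊³) − avg(f₋³)) + (3/2)α(avg((f₊')²) − avg((f₋')²)) − (5/2)(avg((f₊'')²) − avg((f₋'')²)) = 0. -/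
open intervalIntegral

private lemma periodic_deriv' {f : ℝ → ℝ} {L : ℝ} (hper : ∀ x, f (x + L) = f x) :
    ∀ x, deriv f (x + L) = deriv f x := by
  intro x
  rw [← deriv_comp_add_const]
  congr 1
  ext y
  exact hper y

private lemma periodic_iteratedDeriv {f : ℝ → ℝ} {L : ℝ} (hper : ∀ x, f (x + L) = f x)
    (n : ℕ) : ∀ x, iteratedDeriv n f (x + L) = iteratedDeriv n f x := by
  induction n with
  | zero => simpa using hper
  | succ n ih =>
    intro x
    rw [iteratedDeriv_succ]
    exact periodic_deriv' ih x

private lemma kawahara_one_side (α c A H L : ℝ) (hL : 0 < L) (f : ℝ → ℝ)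
    (hf : ContDiff ℝ 5 f) (hper : ∀ ξ : ℝ, f (ξ + L) = f ξ)
    (hode : ∀ ξ : ℝ,
      -c * f ξ + (1/2) * (f ξ) ^ 2 + α * iteratedDeriv 2 f ξ + iteratedDeriv 4 f ξ = A)
    (hH : ∀ ξ : ℝ,
      -(c/2) * (f ξ) ^ 2 + (1/6) * (f ξ) ^ 3 + (α/2) * (deriv f ξ) ^ 2
        + iteratedDeriv 3 f ξ * deriv f ξ - (1/2) * (iteratedDeriv 2 f ξ) ^ 2
        - A * f ξ = H) :
    (-c * ((1/L) * ∫ ξ in (0:ℝ)..L, f ξ) + (1/2) * ((1/L) * ∫ ξ in (0:ℝ)..L, (f ξ) ^ 2) = A)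
    ∧ ((c/2) * ((1/L) * ∫ ξ in (0:ℝ)..L, (f ξ) ^ 2)
        - (1/3) * ((1/L) * ∫ ξ in (0:ℝ)..L, (f ξ) ^ 3)
        + (3/2) * α * ((1/L) * ∫ ξ in (0:ℝ)..L, (deriv f ξ) ^ 2)
        - (5/2) * ((1/L) * ∫ ξ in (0:ℝ)..L, (iteratedDeriv 2 f ξ) ^ 2) = H) := by
  have hL' : L ≠ 0 := hL.ne'
  -- continuity of iterated derivatives
  have cont : ∀ n : ℕ, n ≤ 5 → Continuous (iteratedDeriv n f) := fun n hn =>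
    hf.continuous_iteratedDeriv n (by exact_mod_cast Nat.cast_le.mpr hn)
  have c0 : Continuous f := by simpa using cont 0 (by norm_num)
  have c1 : Continuous (deriv f) := by
    have := cont 1 (by norm_num); rwa [iteratedDeriv_one] at this
  have c2 : Continuous (iteratedDeriv 2 f) := cont 2 (by norm_num)
  have c3 : Continuous (iteratedDeriv 3 f) := cont 3 (by norm_num)
  have c4 : Continuous (iteratedDeriv 4 f) := cont 4 (by norm_num)
  -- HasDerivAt facts
  have hd : ∀ n : ℕ, n < 5 → ∀ x : ℝ,
      HasDerivAt (iteratedDeriv n f) (iteratedDeriv (n+1) f x) x := by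
    intro n hn x
    have hdiff : DifferentiableAt ℝ (iteratedDeriv n f) x :=
      (hf.differentiable_iteratedDeriv n (by exact_mod_cast Nat.cast_lt.mpr hn)).differentiableAt
    have := hdiff.hasDerivAt
    rwa [show deriv (iteratedDeriv n f) x = iteratedDeriv (n+1) f x by
      rw [iteratedDeriv_succ]] at this
  have hd0 : ∀ x : ℝ, HasDerivAt f (deriv f x) x := by
    intro x
    have := hd 0 (by norm_num) x
    simpa [iteratedDeriv_one] using this
  have hd1 : ∀ x : ℝ, HasDerivAt (deriv f) (iteratedDeriv 2 f x) x := by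
    intro x
    have := hd 1 (by norm_num) x
    rwa [show iteratedDeriv 1 f = deriv f from iteratedDeriv_one] at this
  have hd2 : ∀ x : ℝ, HasDerivAt (iteratedDeriv 2 f) (iteratedDeriv 3 f x) x :=
    fun x => hd 2 (by norm_num) x
  have hd3 : ∀ x : ℝ, HasDerivAt (iteratedDeriv 3 f) (iteratedDeriv 4 f x) x :=
    fun x => hd 3 (by norm_num) x
  -- periodicity of derivatives
  have per1 : deriv f L = deriv f 0 := by
    have := periodic_deriv' hper 0; simpa using this
  have per2 : iteratedDeriv 2 f L = iteratedDeriv 2 f 0 := by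
    have := periodic_iteratedDeriv hper 2 0; simpa using this
  have per3 : iteratedDeriv 3 f L = iteratedDeriv 3 f 0 := by
    have := periodic_iteratedDeriv hper 3 0; simpa using this
  have per0 : f L = f 0 := by have := hper 0; simpa using this
  -- integrability
  have ii : ∀ g : ℝ → ℝ, Continuous g → IntervalIntegrable g MeasureTheory.volume 0 L :=
    fun g hg => hg.intervalIntegrable 0 L
  -- ∫ d2 = 0
  have int_d2 : (∫ x in (0:ℝ)..L, iteratedDeriv 2 f x) = 0 := by
    have : (∫ x in (0:ℝ)..L, iteratedDeriv 2 f x)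
        = deriv f L - deriv f 0 :=
      integral_eq_sub_of_hasDerivAt (fun x _ => hd1 x) (ii _ c2)
    rw [this, per1, sub_self]
  have int_d4 : (∫ x in (0:ℝ)..L, iteratedDeriv 4 f x) = 0 := by
    have : (∫ x in (0:ℝ)..L, iteratedDeriv 4 f x)
        = iteratedDeriv 3 f L - iteratedDeriv 3 f 0 :=
      integral_eq_sub_of_hasDerivAt (fun x _ => hd3 x) (ii _ c4)
    rw [this, per3, sub_self]
  -- IBP: ∫ f * d2 = -∫ (f')²
  have ibp1 : (∫ x in (0:ℝ)..L, f x * iteratedDeriv 2 f x)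
      = - ∫ x in (0:ℝ)..L, (deriv f x) ^ 2 := by
    have h := integral_mul_deriv_eq_deriv_mul (a := (0:ℝ)) (b := L)
      (fun x _ => hd0 x) (fun x _ => hd1 x) (ii _ c1) (ii _ c2)
    rw [h, per0, per1]
    ring_nf
  -- IBP: ∫ f' * d3 = -∫ (d2)²
  have ibp2 : (∫ x in (0:ℝ)..L, deriv f x * iteratedDeriv 3 f x)
      = - ∫ x in (0:ℝ)..L, (iteratedDeriv 2 f x) ^ 2 := by
    have h := integral_mul_deriv_eq_deriv_mul (a := (0:ℝ)) (b := L)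
      (fun x _ => hd1 x) (fun x _ => hd2 x) (ii _ c2) (ii _ c3)
    rw [h, per1, per2]
    ring_nf
  -- IBP: ∫ f * d4 = ∫ (d2)²
  have ibp3 : (∫ x in (0:ℝ)..L, f x * iteratedDeriv 4 f x)
      = ∫ x in (0:ℝ)..L, (iteratedDeriv 2 f x) ^ 2 := by
    have h := integral_mul_deriv_eq_deriv_mul (a := (0:ℝ)) (b := L)
      (fun x _ => hd0 x) (fun x _ => hd3 x) (ii _ c1) (ii _ c4)
    rw [h, per0, per3, ibp2]
    ring
  -- abbreviations
  set I0 := ∫ ξ in (0:ℝ)..L, f ξ with hI0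
  set I2 := ∫ ξ in (0:ℝ)..L, (f ξ) ^ 2 with hI2
  set I3 := ∫ ξ in (0:ℝ)..L, (f ξ) ^ 3 with hI3
  set J1 := ∫ ξ in (0:ℝ)..L, (deriv f ξ) ^ 2 with hJ1
  set J2 := ∫ ξ in (0:ℝ)..L, (iteratedDeriv 2 f ξ) ^ 2 with hJ2
  -- Equation 1: average of ODE
  have E1 : -c * I0 + (1/2) * I2 = A * L := by
    have h1 : (∫ x in (0:ℝ)..L,
        (-c * f x + (1/2) * (f x) ^ 2 + α * iteratedDeriv 2 f x + iteratedDeriv 4 f x))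
        = A * L := by
      simp only [hode]
      simp [smul_eq_mul, mul_comm]
    rw [integral_add (((ii _ (continuous_const.fun_mul (c0))).add (ii _ (continuous_const.fun_mul ((c0.fun_pow 2))))).add
          (ii _ (continuous_const.fun_mul (c2)))) (ii _ c4),
        integral_add ((ii _ (continuous_const.fun_mul (c0))).add (ii _ (continuous_const.fun_mul ((c0.fun_pow 2)))))
          (ii _ (continuous_const.fun_mul (c2))),
        integral_add (ii _ (continuous_const.fun_mul (c0))) (ii _ (continuous_const.fun_mul ((c0.fun_pow 2)))),
        intervalIntegral.integral_const_mul, intervalIntegral.integral_const_mul, intervalIntegral.integral_const_mul] at h1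
    rw [int_d2, int_d4] at h1
    linarith [h1]
  -- Equation 2: ODE multiplied by f
  have E2 : -c * I2 + (1/2) * I3 - α * J1 + J2 = A * I0 := by
    have hpt : ∀ x : ℝ, -c * (f x) ^ 2 + (1/2) * (f x) ^ 3
        + α * (f x * iteratedDeriv 2 f x) + f x * iteratedDeriv 4 f x = A * f x := by
      intro x
      linear_combination (f x) * hode x
    have h1 : (∫ x in (0:ℝ)..L,
        (-c * (f x) ^ 2 + (1/2) * (f x) ^ 3
          + α * (f x * iteratedDeriv 2 f x) + f x * iteratedDeriv 4 f x))
        = ∫ x in (0:ℝ)..L, A * f x := by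
      congr 1; ext x; exact hpt x
    rw [integral_const_mul] at h1
    rw [integral_add (((ii _ (continuous_const.fun_mul ((c0.fun_pow 2)))).add (ii _ (continuous_const.fun_mul ((c0.fun_pow 3))))).add
          (ii _ (continuous_const.fun_mul ((c0.fun_mul c2))))) (ii _ (c0.fun_mul c4)),
        integral_add ((ii _ (continuous_const.fun_mul ((c0.fun_pow 2)))).add (ii _ (continuous_const.fun_mul ((c0.fun_pow 3)))))
          (ii _ (continuous_const.fun_mul ((c0.fun_mul c2)))),
        integral_add (ii _ (continuous_const.fun_mul ((c0.fun_pow 2)))) (ii _ (continuous_const.fun_mul ((c0.fun_pow 3)))),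
        intervalIntegral.integral_const_mul, intervalIntegral.integral_const_mul, intervalIntegral.integral_const_mul] at h1
    rw [ibp1, ibp3] at h1
    linarith [h1]
  -- Equation 3: average of Hamiltonian
  have E3 : -(c/2) * I2 + (1/6) * I3 + (α/2) * J1 - (3/2) * J2 - A * I0 = H * L := by
    have h1 : (∫ x in (0:ℝ)..L,
        (-(c/2) * (f x) ^ 2 + (1/6) * (f x) ^ 3 + (α/2) * (deriv f x) ^ 2
          + iteratedDeriv 3 f x * deriv f x - (1/2) * (iteratedDeriv 2 f x) ^ 2
          - A * f x)) = H * L := by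
      simp only [hH]
      simp [smul_eq_mul, mul_comm]
    have i1 := ii _ (continuous_const.fun_mul (c0.fun_pow 2) : Continuous fun x => -(c/2) * f x ^ 2)
    have i2 := ii _ (continuous_const.fun_mul (c0.fun_pow 3) : Continuous fun x => (1/6:ℝ) * f x ^ 3)
    have i3 := ii _ (continuous_const.fun_mul (c1.fun_pow 2) : Continuous fun x => (α/2) * deriv f x ^ 2)
    have i4 := ii _ (c3.fun_mul c1)
    have i5 := ii _ (continuous_const.fun_mul (c2.fun_pow 2) : Continuous fun x => (1/2:ℝ) * iteratedDeriv 2 f x ^ 2)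
    have i6 := ii _ (continuous_const.fun_mul c0 : Continuous fun x => A * f x)
    rw [integral_sub ((((i1.add i2).add i3).add i4).sub i5) i6,
        integral_sub (((i1.add i2).add i3).add i4) i5,
        integral_add ((i1.add i2).add i3) i4,
        integral_add (i1.add i2) i3,
        integral_add i1 i2,
        intervalIntegral.integral_const_mul, intervalIntegral.integral_const_mul, intervalIntegral.integral_const_mul,
        intervalIntegral.integral_const_mul, intervalIntegral.integral_const_mul] at h1
    have hdd : (∫ x in (0:ℝ)..L, iteratedDeriv 3 f x * deriv f x) = -J2 := by
      rw [show (∫ x in (0:ℝ)..L, iteratedDeriv 3 f x * deriv f x)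
        = ∫ x in (0:ℝ)..L, deriv f x * iteratedDeriv 3 f x by
          congr 1; ext x; ring]
      exact ibp2
    rw [hdd] at h1
    linarith [h1]
  constructor
  · field_simp
    linear_combination 2 * E1
  · have key : (c/2) * I2 - (1/3) * I3 + (3/2) * α * J1 - (5/2) * J2 = H * L := by
      linear_combination E3 - E2
    field_simp
    linear_combination 6 * key



/-- Jump conditions: if `f₊` and `f₋` are smooth periodic solutions of
`−c f + (1/2) f² + α f'' + f⁽⁴⁾ = A` with the same constants `c`, `A` and the same
Hamiltonian value `H`, then the differences of the period averages satisfy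
(i) `−c(avg f₊ − avg f₋) + (1/2)(avg f₊² − avg f₋²) = 0` and
(ii) `(c/2)(avg f₊² − avg f₋²) − (1/3)(avg f₊³ − avg f₋³)
      + (3/2)α(avg (f₊')² − avg (f₋')²) − (5/2)(avg (f₊'')² − avg (f₋'')²) = 0`. -/
theorem kawahara_jump_conditions (α c A H Lp Lm : ℝ) (hLp : 0 < Lp) (hLm : 0 < Lm)
    (fp fm : ℝ → ℝ) (hfp : ContDiff ℝ 5 fp) (hfm : ContDiff ℝ 5 fm)
    (hperp : ∀ ξ : ℝ, fp (ξ + Lp) = fp ξ) (hperm : ∀ ξ : ℝ, fm (ξ + Lm) = fm ξ)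
    (hodep : ∀ ξ : ℝ,
      -c * fp ξ + (1/2) * (fp ξ) ^ 2 + α * iteratedDeriv 2 fp ξ
        + iteratedDeriv 4 fp ξ = A)
    (hodem : ∀ ξ : ℝ,
      -c * fm ξ + (1/2) * (fm ξ) ^ 2 + α * iteratedDeriv 2 fm ξ
        + iteratedDeriv 4 fm ξ = A)
    (hHp : ∀ ξ : ℝ,
      -(c/2) * (fp ξ) ^ 2 + (1/6) * (fp ξ) ^ 3 + (α/2) * (deriv fp ξ) ^ 2
        + iteratedDeriv 3 fp ξ * deriv fp ξ - (1/2) * (iteratedDeriv 2 fp ξ) ^ 2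
        - A * fp ξ = H)
    (hHm : ∀ ξ : ℝ,
      -(c/2) * (fm ξ) ^ 2 + (1/6) * (fm ξ) ^ 3 + (α/2) * (deriv fm ξ) ^ 2
        + iteratedDeriv 3 fm ξ * deriv fm ξ - (1/2) * (iteratedDeriv 2 fm ξ) ^ 2
        - A * fm ξ = H) :
    (-c * (((1/Lp) * ∫ ξ in (0:ℝ)..Lp, fp ξ) - ((1/Lm) * ∫ ξ in (0:ℝ)..Lm, fm ξ))
      + (1/2) * (((1/Lp) * ∫ ξ in (0:ℝ)..Lp, (fp ξ) ^ 2)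
          - ((1/Lm) * ∫ ξ in (0:ℝ)..Lm, (fm ξ) ^ 2)) = 0)
    ∧ ((c/2) * (((1/Lp) * ∫ ξ in (0:ℝ)..Lp, (fp ξ) ^ 2)
          - ((1/Lm) * ∫ ξ in (0:ℝ)..Lm, (fm ξ) ^ 2))
      - (1/3) * (((1/Lp) * ∫ ξ in (0:ℝ)..Lp, (fp ξ) ^ 3)
          - ((1/Lm) * ∫ ξ in (0:ℝ)..Lm, (fm ξ) ^ 3))
      + (3/2) * α * (((1/Lp) * ∫ ξ in (0:ℝ)..Lp, (deriv fp ξ) ^ 2)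
          - ((1/Lm) * ∫ ξ in (0:ℝ)..Lm, (deriv fm ξ) ^ 2))
      - (5/2) * (((1/Lp) * ∫ ξ in (0:ℝ)..Lp, (iteratedDeriv 2 fp ξ) ^ 2)
          - ((1/Lm) * ∫ ξ in (0:ℝ)..Lm, (iteratedDeriv 2 fm ξ) ^ 2)) = 0) := by
  obtain ⟨p1, p2⟩ := kawahara_one_side α c A H Lp hLp fp hfp hperp hodep hHp
  obtain ⟨m1, m2⟩ := kawahara_one_side α c A H Lm hLm fm hfm hperm hodem hHm
  constructor
  · linarith
  · linarith
end

section
/- For the Stokes expansion of periodic traveling waves of the Kawahara equation, substituting φ = ū + a·(1/2)cos θ + a² φ₂(θ) and ω = ū k − α k³ + k⁵ + a² ω₂ into the equation −(ω/k) φ + (1/2) φ² + α k² φ'' + k⁴ φ⁽⁴⁾ = A and collecting terms at order a² determines φ₂(θ) = −cos(2θ)/(240 k⁴ − 48 α k²), provided 240 k⁴ − 48 α k² ≠ 0, i.e., k² ≠ α/5. -/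
/-! The correction `φ₂ = −cos(2θ)/D` is a pure second harmonic, so each even derivative
`d^{2n}/dθ^{2n}` acts on it as multiplication by `(−4)ⁿ`. The left-hand side therefore
collapses to `(α k² − k⁴ − 4 α k² + 16 k⁴) φ₂ + cos(2θ)/16 = (15 k⁴ − 3 α k²) φ₂ + cos(2θ)/16`,
which vanishes because `D = 16 (15 k⁴ − 3 α k²)`. -/

theorem Real.iteratedDeriv_even_cos_const_mul (n : ℕ) (c x : ℝ) :
    iteratedDeriv (2 * n) (fun s => Real.cos (c * s)) x = (-c ^ 2) ^ n * Real.cos (c * x) := by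
  rw [iteratedDeriv_comp_const_mul Real.contDiff_cos, Real.iteratedDeriv_even_cos]
  simp only [Pi.mul_apply, Pi.pow_apply, Pi.neg_apply, Pi.one_apply]
  rw [neg_pow, pow_mul]
  ring

theorem Real.iteratedDeriv_even_neg_cos_const_mul_div (n : ℕ) (c d x : ℝ) :
    iteratedDeriv (2 * n) (fun s => -Real.cos (c * s) / d) x =
      (-c ^ 2) ^ n * (-Real.cos (c * x) / d) := by
  rw [iteratedDeriv_div_const, iteratedDeriv_fun_neg, Real.iteratedDeriv_even_cos_const_mul]
  ring

theorem kawahara_stokes_second_order_general (ubar α k : ℝ)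
    (hres : 240 * k ^ 4 - 48 * α * k ^ 2 ≠ 0) :
    ∀ θ : ℝ,
      (ubar - (ubar - α * k ^ 2 + k ^ 4))
          * (-Real.cos (2 * θ) / (240 * k ^ 4 - 48 * α * k ^ 2))
        + α * k ^ 2 * iteratedDeriv 2
            (fun s => -Real.cos (2 * s) / (240 * k ^ 4 - 48 * α * k ^ 2)) θ
        + k ^ 4 * iteratedDeriv 4
            (fun s => -Real.cos (2 * s) / (240 * k ^ 4 - 48 * α * k ^ 2)) θ
        + (1/16) * Real.cos (2 * θ) = 0 := by
  intro θ
  set D := 240 * k ^ 4 - 48 * α * k ^ 2 with hD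
  rw [show (2 : ℕ) = 2 * 1 from rfl, show (4 : ℕ) = 2 * 2 from rfl,
    Real.iteratedDeriv_even_neg_cos_const_mul_div, Real.iteratedDeriv_even_neg_cos_const_mul_div]
  field_simp
  rw [hD]
  ring

/-- Second-order Stokes correction for periodic traveling waves of the Kawahara
equation: with leading-order speed `c₀ = ū − α k² + k⁴` and provided
`240 k⁴ − 48 α k² ≠ 0` (i.e. `k² ≠ α/5`), the function
`φ₂(θ) = −cos(2θ)/(240 k⁴ − 48 α k²)` satisfies the second-harmonic balance
obtained at order `a²`:
`(ū − c₀) φ₂ + α k² φ₂'' + k⁴ φ₂⁗ + (1/16) cos 2θ = 0`. -/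
theorem kawahara_stokes_second_order (ubar α k : ℝ) (hk : k ≠ 0)
    (hres : 240 * k ^ 4 - 48 * α * k ^ 2 ≠ 0) :
    ∀ θ : ℝ,
      (ubar - (ubar - α * k ^ 2 + k ^ 4))
          * (-Real.cos (2 * θ) / (240 * k ^ 4 - 48 * α * k ^ 2))
        + α * k ^ 2 * iteratedDeriv 2
            (fun s => -Real.cos (2 * s) / (240 * k ^ 4 - 48 * α * k ^ 2)) θ
        + k ^ 4 * iteratedDeriv 4
            (fun s => -Real.cos (2 * s) / (240 * k ^ 4 - 48 * α * k ^ 2)) θ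
        + (1/16) * Real.cos (2 * θ) = 0 :=
  kawahara_stokes_second_order_general ubar α k hres
end
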